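/- arXiv:2104.00673 — 3 statements merged into one kernel-verified Lean document; each statement's English description precedes it below -/
import Mathlib

section
/- When the fitting algorithm is ordinary least squares and the loss is squared error, the K-fold cross-validation estimate of prediction error Êrr^(CV) = (1/n)∑_{i=1}^n e_i, where e_i = (y_i − x_iᵀθ̂^(−k(i)))² and θ̂^(−k(i)) is the OLS fit on all folds except the one containing observation i, is linearly invariant: for every κ ∈ ℝ^p, its value on the data (x_1, y_1 + x_1ᵀκ), …, (x_n, y_n + x_nᵀκ) (with the same fold assignment) equals its value on (x_1, y_1), …, (x_n, y_n). -/
/-!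
STATEMENT 0: K-fold cross-validation with OLS fitting and squared-error loss is
linearly invariant: replacing each response `y i` by `y i + ⟪x i, κ⟫` (keeping the
same fold assignment) leaves the CV estimate of prediction error unchanged.
-/

open scoped Matrix BigOperators

noncomputable section

/-- The OLS coefficient estimate fit on the observations indexed by `S`:
`θ̂ = (∑_{j∈S} x_j x_jᵀ)⁻¹ (∑_{j∈S} y_j x_j)`. -/
def olsOn {n p : ℕ} (x : Fin n → Fin p → ℝ) (y : Fin n → ℝ) (S : Finset (Fin n)) :
    Fin p → ℝ :=
  (∑ j ∈ S, Matrix.vecMulVec (x j) (x j))⁻¹ *ᵥ (∑ j ∈ S, y j • x j)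

/-- The K-fold cross-validation estimate of prediction error with squared-error loss
and OLS fitting: `Êrr^(CV) = (1/n) ∑_i (y_i − x_iᵀ θ̂^(−k(i)))²`, where `θ̂^(−k(i))`
is the OLS fit on all the observations not in the fold of observation `i`. -/
def cvEstimate {n p K : ℕ} (x : Fin n → Fin p → ℝ) (y : Fin n → ℝ)
    (fold : Fin n → Fin K) : ℝ :=
  (1 / (n : ℝ)) *
    ∑ i, (y i - x i ⬝ᵥ olsOn x y {j | fold j ≠ fold i}) ^ 2

lemma olsOn_shift {n p : ℕ} (x : Fin n → Fin p → ℝ) (y : Fin n → ℝ)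
    (κ : Fin p → ℝ) (S : Finset (Fin n))
    (h : IsUnit (∑ j ∈ S, Matrix.vecMulVec (x j) (x j))) :
    olsOn x (fun i => y i + x i ⬝ᵥ κ) S = olsOn x y S + κ := by
  set A := ∑ j ∈ S, Matrix.vecMulVec (x j) (x j) with hA
  have hAv : A *ᵥ κ = ∑ j ∈ S, (x j ⬝ᵥ κ) • x j := by
    ext k
    simp only [hA, Matrix.mulVec, dotProduct, Matrix.vecMulVec, Finset.sum_apply,
      Matrix.sum_apply, Matrix.of_apply, Pi.smul_apply, smul_eq_mul, Finset.mul_sum]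
    simp only [Finset.sum_mul, Finset.mul_sum]
    rw [Finset.sum_comm]
    exact Finset.sum_congr rfl fun j _ => Finset.sum_congr rfl fun l _ => by ring
  have hsum : (∑ j ∈ S, (y j + x j ⬝ᵥ κ) • x j)
      = (∑ j ∈ S, y j • x j) + A *ᵥ κ := by
    rw [hAv, ← Finset.sum_add_distrib]
    refine Finset.sum_congr rfl fun j _ => ?_
    rw [add_smul]
  unfold olsOn
  rw [hsum, Matrix.mulVec_add, ← hA]
  congr 1
  rw [Matrix.mulVec_mulVec, Matrix.nonsing_inv_mul _ (Matrix.isUnit_iff_isUnit_det _ |>.mp h),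
    Matrix.one_mulVec]

/-- **Linear invariance of cross-validation with OLS** (Lemma 1).  If the Gram matrix
of each leave-one-fold-out design is invertible (so that the OLS fits are
well defined), then for every `κ ∈ ℝ^p` the CV estimate computed on the shifted data
`(x_i, y_i + x_iᵀκ)` (with the same fold assignment) equals the CV estimate computed
on `(x_i, y_i)`. -/
theorem cv_ols_linearly_invariant {n p K : ℕ}
    (x : Fin n → Fin p → ℝ) (y : Fin n → ℝ) (fold : Fin n → Fin K) (κ : Fin p → ℝ)
    (hGram : ∀ k : Fin K,
      IsUnit (∑ j ∈ ({j | fold j ≠ k} : Finset (Fin n)), Matrix.vecMulVec (x j) (x j))) :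
    cvEstimate x (fun i => y i + x i ⬝ᵥ κ) fold = cvEstimate x y fold := by
  unfold cvEstimate
  congr 1
  refine Finset.sum_congr rfl fun i _ => ?_
  rw [olsOn_shift x y κ _ (hGram (fold i)), dotProduct_add]
  ring
end
end

section
/- Assume the homoskedastic Gaussian linear model holds and Êrr is a linearly invariant estimator of prediction error. Let Y' be an independent copy of the response vector generated from the same features X (so Y'_i = X_iᵀθ + ε'_i with ε' an independent copy of ε), and let Êrr_XY and Êrr_XY' denote the estimator computed on (X, Y) and on (X, Y') respectively. Then (Err_XY, Êrr_XY) and (Err_XY, Êrr_XY') have the same joint distribution. -/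
open MeasureTheory ProbabilityTheory Filter
open scoped Matrix BigOperators ENNReal NNReal

noncomputable section

/-- OLS coefficient estimate `θ̂ = (XᵀX)⁻¹XᵀY`. -/
def ols {n p : ℕ} (x : Fin n → Fin p → ℝ) (y : Fin n → ℝ) : Fin p → ℝ :=
  ((Matrix.of x)ᵀ * Matrix.of x)⁻¹ *ᵥ ((Matrix.of x)ᵀ *ᵥ y)

/-- The homoskedastic Gaussian linear model: `n` training points plus one test point
(index `Fin.last n`), i.i.d. data points `(Xᵢ, Yᵢ)` with `Yᵢ = Xᵢᵀθ + εᵢ`,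
`εᵢ` i.i.d. `N(0, σ²)` independent of the features. -/
structure GLM (n p : ℕ) (Ω : Type) [MeasurableSpace Ω] (μ : Measure Ω) where
  /-- true coefficient vector -/
  θ : Fin p → ℝ
  /-- noise variance -/
  σ2 : ℝ≥0
  /-- features of the `n` training points and the test point -/
  X : Ω → Fin (n + 1) → Fin p → ℝ
  /-- noise of the `n` training points and the test point -/
  ε : Ω → Fin (n + 1) → ℝ
  measX : Measurable X
  measε : Measurable ε
  /-- the noise vector is independent of all the features -/
  indep : IndepFun X ε μ
  /-- the noise variables are i.i.d. `N(0, σ²)` -/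
  gauss : Measure.map ε μ = Measure.pi fun _ : Fin (n + 1) => gaussianReal 0 σ2
  /-- the data points are independent -/
  iid : iIndepFun (fun i ω => (X ω i, ε ω i)) μ
  /-- the data points are identically distributed -/
  idd : ∀ i, Measure.map (fun ω => (X ω i, ε ω i)) μ
      = Measure.map (fun ω => (X ω 0, ε ω 0)) μ

namespace GLM

attribute [local fun_prop] measX measε

variable {n p : ℕ} {Ω : Type} [MeasurableSpace Ω] {μ : Measure Ω}

/-- responses `Yᵢ = Xᵢᵀθ + εᵢ` -/
def Y (M : GLM n p Ω μ) (ω : Ω) (i : Fin (n + 1)) : ℝ := M.X ω i ⬝ᵥ M.θ + M.ε ω i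

/-- training features -/
def Xtr (M : GLM n p Ω μ) (ω : Ω) : Fin n → Fin p → ℝ := fun i => M.X ω i.castSucc

/-- training responses -/
def Ytr (M : GLM n p Ω μ) (ω : Ω) : Fin n → ℝ := fun i => M.Y ω i.castSucc

/-- σ-algebra generated by the training data `(X, Y)` -/
def mXY (M : GLM n p Ω μ) : MeasurableSpace Ω :=
  MeasurableSpace.comap (fun ω => (M.Xtr ω, M.Ytr ω)) inferInstance

/-- σ-algebra generated by the training features `X` -/
def mX (M : GLM n p Ω μ) : MeasurableSpace Ω :=
  MeasurableSpace.comap M.Xtr inferInstance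

/-- squared-error loss of the OLS fit at the independent test point -/
def testLoss (M : GLM n p Ω μ) (ω : Ω) : ℝ :=
  (M.Y ω (Fin.last n) - M.X ω (Fin.last n) ⬝ᵥ ols (M.Xtr ω) (M.Ytr ω)) ^ 2

/-- `Err_XY := E[(Y_{n+1} − X_{n+1}ᵀθ̂)² | (X, Y)]`, the out-of-sample prediction
error of the model fit on the training data -/
def errXY (M : GLM n p Ω μ) : Ω → ℝ := μ[M.testLoss | M.mXY]

/-- `Err_X := E[Err_XY | X]` -/
def errX (M : GLM n p Ω μ) : Ω → ℝ := μ[M.errXY | M.mX]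

/-- `Err := E[Err_XY]`, the average prediction error -/
def err (M : GLM n p Ω μ) : ℝ := ∫ ω, M.errXY ω ∂μ

end GLM

/-- A linearly invariant estimator of prediction error: a (measurable) function of the
training data `(x, y)` and of an independent randomization variable `u`, whose value is
unchanged when each `yᵢ` is replaced by `yᵢ + xᵢᵀκ`. -/
structure LinInvEstimator (n p : ℕ) where
  /-- value on data `(x, y)` with randomization `u` -/
  F : (Fin n → Fin p → ℝ) → (Fin n → ℝ) → ℝ → ℝ
  meas : Measurable fun q : ((Fin n → Fin p → ℝ) × (Fin n → ℝ)) × ℝ => F q.1.1 q.1.2 q.2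
  invariant : ∀ x y u (κ : Fin p → ℝ), F x (fun i => y i + x i ⬝ᵥ κ) u = F x y u

/-- the estimator, as a random variable, evaluated on the training data of a Gaussian
linear model with randomization `U` -/
def LinInvEstimator.rv {n p : ℕ} {Ω : Type} [MeasurableSpace Ω] {μ : Measure Ω}
    (E : LinInvEstimator n p) (M : GLM n p Ω μ) (U : Ω → ℝ) : Ω → ℝ :=
  fun ω => E.F (M.Xtr ω) (M.Ytr ω) (U ω)

end

/-!
Write the training responses as `Y = Xθ + ε`, let `H` be the hat matrix of the training design
and `Q = 1 - H`. By linear invariance the estimator sees the noise only through `Qε`. The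
conditional error `Err_XY` integrates the loss over the independent test point, so it is a
function of `X` and of the OLS fit, which sees the noise only through `Hε`. Given `X` and the
randomization, `(ε, ε') ↦ (Hε + Qε', Qε + Hε')` is an orthogonal map of `ℝⁿ × ℝⁿ`, hence
preserves the law of the i.i.d. Gaussian pair `(ε, ε')`; it keeps the fitted part of the first
vector and moves the residual part `Qε` onto the second, which carries
`(Err_XY, Êrr_XY')` to `(Err_XY, Êrr_XY)`.
-/

open Matrix

section HatMatrix

variable {m k : Type*} [Fintype m] [Fintype k] [DecidableEq k]

-- For singular `XᵀX` the inverse is `0`, so `hatMatrix X = 0`; the identities below still hold.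
noncomputable def olsMatrix (X : Matrix m k ℝ) : Matrix k m ℝ := (Xᵀ * X)⁻¹ * Xᵀ

noncomputable def hatMatrix (X : Matrix m k ℝ) : Matrix m m ℝ := X * olsMatrix X

theorem Matrix.nonsing_inv_mul_self_mul_nonsing_inv {R : Type*} [CommRing R] (A : Matrix k k R) :
    A⁻¹ * A * A⁻¹ = A⁻¹ := by
  by_cases h : IsUnit A.det
  · rw [nonsing_inv_mul _ h, one_mul]
  · simp [nonsing_inv_apply_not_isUnit _ h]

theorem olsMatrix_mul_hatMatrix (X : Matrix m k ℝ) : olsMatrix X * hatMatrix X = olsMatrix X :=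
  calc olsMatrix X * hatMatrix X = (Xᵀ * X)⁻¹ * (Xᵀ * X) * (Xᵀ * X)⁻¹ * Xᵀ := by
        simp only [olsMatrix, hatMatrix, Matrix.mul_assoc]
    _ = olsMatrix X := by rw [nonsing_inv_mul_self_mul_nonsing_inv, olsMatrix]

theorem isIdempotentElem_hatMatrix (X : Matrix m k ℝ) : IsIdempotentElem (hatMatrix X) :=
  calc hatMatrix X * hatMatrix X = X * (olsMatrix X * hatMatrix X) := Matrix.mul_assoc _ _ _
    _ = hatMatrix X := by rw [olsMatrix_mul_hatMatrix, hatMatrix]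

theorem isSymm_hatMatrix (X : Matrix m k ℝ) : (hatMatrix X).IsSymm := by
  simp [IsSymm, hatMatrix, olsMatrix, transpose_mul, transpose_nonsing_inv, Matrix.mul_assoc]

end HatMatrix

theorem Matrix.fromBlocks_one_sub_transpose_mul_self {ι R : Type*} [Fintype ι] [DecidableEq ι]
    [CommRing R] {H : Matrix ι ι R} (hH : IsIdempotentElem H) (hHT : H.IsSymm) :
    (fromBlocks H (1 - H) (1 - H) H)ᵀ * fromBlocks H (1 - H) (1 - H) H = 1 := by
  rw [fromBlocks_transpose, transpose_sub, transpose_one, hHT.eq, fromBlocks_multiply, hH.eq,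
    hH.one_sub.eq, hH.mul_one_sub_self, hH.one_sub_mul_self, add_zero, add_sub_cancel,
    sub_add_cancel, fromBlocks_one]

section Measurability

variable {α m k : Type*} [MeasurableSpace α] [Fintype m] [Fintype k]

@[fun_prop]
theorem Measurable.of_mulVec {f : α → m → k → ℝ} {g : α → k → ℝ} (hf : Measurable f)
    (hg : Measurable g) : Measurable fun a => of (f a) *ᵥ g a := by
  have h : Continuous fun q : (m → k → ℝ) × (k → ℝ) => of q.1 *ᵥ q.2 :=
    Continuous.matrix_mulVec continuous_fst continuous_snd
  exact h.measurable.comp (hf.prodMk hg)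

@[fun_prop]
theorem Measurable.dotProduct {f g : α → k → ℝ} (hf : Measurable f) (hg : Measurable g) :
    Measurable fun a => f a ⬝ᵥ g a :=
  (continuous_fst.dotProduct continuous_snd).measurable.comp (hf.prodMk hg)

end Measurability

section OLS

variable {n p : ℕ}

theorem ols_eq_olsMatrix_mulVec (x : Fin n → Fin p → ℝ) (y : Fin n → ℝ) :
    ols x y = olsMatrix (of x) *ᵥ y := by
  rw [ols, olsMatrix, mulVec_mulVec]

theorem hatMatrix_mulVec (x : Fin n → Fin p → ℝ) (y : Fin n → ℝ) :
    hatMatrix (of x) *ᵥ y = of x *ᵥ ols x y := by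
  rw [hatMatrix, ← mulVec_mulVec, ols_eq_olsMatrix_mulVec]

theorem ols_congr_hat {x : Fin n → Fin p → ℝ} {y y' : Fin n → ℝ}
    (h : hatMatrix (of x) *ᵥ y = hatMatrix (of x) *ᵥ y') : ols x y = ols x y' := by
  rw [ols_eq_olsMatrix_mulVec, ols_eq_olsMatrix_mulVec, ← olsMatrix_mul_hatMatrix,
    ← mulVec_mulVec, ← mulVec_mulVec, h]

theorem measurable_ols :
    Measurable fun q : (Fin n → Fin p → ℝ) × (Fin n → ℝ) => ols q.1 q.2 := by
  have hX : Continuous fun q : (Fin n → Fin p → ℝ) × (Fin n → ℝ) => of q.1 := continuous_fst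
  have hC := hX.matrix_transpose.matrix_mul hX
  have h : (fun q : (Fin n → Fin p → ℝ) × (Fin n → ℝ) => ols q.1 q.2) = fun q =>
      ((of q.1)ᵀ * of q.1).det⁻¹ • (((of q.1)ᵀ * of q.1).adjugate *ᵥ ((of q.1)ᵀ *ᵥ q.2)) := by
    ext q : 1
    rw [ols, inv_def, Ring.inverse_eq_inv', smul_mulVec]
  rw [h]
  exact hC.matrix_det.measurable.inv.smul
    (hC.matrix_adjugate.matrix_mulVec (hX.matrix_transpose.matrix_mulVec continuous_snd)).measurable

@[fun_prop]
theorem Measurable.ols {α : Type*} [MeasurableSpace α] {f : α → Fin n → Fin p → ℝ}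
    {g : α → Fin n → ℝ} (hf : Measurable f) (hg : Measurable g) :
    Measurable fun a => _root_.ols (f a) (g a) :=
  measurable_ols.comp (f := fun a => (f a, g a)) (hf.prodMk hg)

@[fun_prop]
theorem Measurable.hatMatrix_mulVec {α : Type*} [MeasurableSpace α] {f : α → Fin n → Fin p → ℝ}
    {g : α → Fin n → ℝ} (hf : Measurable f) (hg : Measurable g) :
    Measurable fun a => hatMatrix (of (f a)) *ᵥ g a := by
  simp_rw [_root_.hatMatrix_mulVec]
  fun_prop

end OLS

namespace LinInvEstimator

variable {n p : ℕ} (E : LinInvEstimator n p)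

@[fun_prop]
theorem measurable_F_comp {α : Type*} [MeasurableSpace α] {f : α → Fin n → Fin p → ℝ}
    {g : α → Fin n → ℝ} {h : α → ℝ} (hf : Measurable f) (hg : Measurable g) (hh : Measurable h) :
    Measurable fun a => E.F (f a) (g a) (h a) :=
  E.meas.comp ((hf.prodMk hg).prodMk hh)

theorem F_one_sub_hatMatrix_mulVec (x : Fin n → Fin p → ℝ) (y : Fin n → ℝ) (u : ℝ) :
    E.F x ((1 - hatMatrix (of x)) *ᵥ y) u = E.F x y u := by
  have hy : (1 - hatMatrix (of x)) *ᵥ y + of x *ᵥ ols x y = y := by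
    rw [sub_mulVec, one_mulVec, hatMatrix_mulVec, sub_add_cancel]
  calc E.F x ((1 - hatMatrix (of x)) *ᵥ y) u
      = E.F x ((1 - hatMatrix (of x)) *ᵥ y + of x *ᵥ ols x y) u := (E.invariant x _ u _).symm
    _ = E.F x y u := by rw [hy]

theorem F_congr_residual {x : Fin n → Fin p → ℝ} {y y' : Fin n → ℝ} (u : ℝ)
    (h : (1 - hatMatrix (of x)) *ᵥ y = (1 - hatMatrix (of x)) *ᵥ y') :
    E.F x y u = E.F x y' u := by
  rw [← F_one_sub_hatMatrix_mulVec, h, F_one_sub_hatMatrix_mulVec]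

end LinInvEstimator

section GaussianRotation

variable {ι : Type*} [Fintype ι]

theorem charFun_map_toLp_pi_gaussianReal (v : ℝ≥0) (s : ι → ℝ) :
    charFun ((Measure.pi fun _ : ι => gaussianReal 0 v).map (WithLp.toLp 2)) (WithLp.toLp 2 s)
      = Complex.exp (-(v * (s ⬝ᵥ s) / 2) : ℝ) := by
  simp_rw [charFun_pi, charFun_gaussianReal, ← Complex.exp_sum, dotProduct]
  push_cast
  simp [Finset.mul_sum, Finset.sum_div, sq]

theorem map_mulVec_pi_gaussianReal [DecidableEq ι] {O : Matrix ι ι ℝ} (hO : Oᵀ * O = 1)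
    (v : ℝ≥0) :
    (Measure.pi fun _ : ι => gaussianReal 0 v).map (O *ᵥ ·)
      = Measure.pi fun _ : ι => gaussianReal 0 v := by
  rw [← charFun_eq_pi_iff]
  rintro ⟨s⟩
  have hinner : ∀ x : ι → ℝ, inner ℝ (WithLp.toLp 2 (O *ᵥ x)) (WithLp.toLp 2 s)
      = inner ℝ (WithLp.toLp 2 x) (WithLp.toLp 2 (Oᵀ *ᵥ s)) := by
    intro x
    simp [EuclideanSpace.inner_toLp_toLp, dotProduct_mulVec, vecMul_transpose, dotProduct_comm]
  have hdot : (Oᵀ *ᵥ s) ⬝ᵥ (Oᵀ *ᵥ s) = s ⬝ᵥ s := by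
    rw [dotProduct_mulVec, vecMul_transpose, mulVec_mulVec, mul_eq_one_comm.mp hO, one_mulVec]
  rw [← charFun_pi, charFun_map_toLp_pi_gaussianReal, ← hdot,
    ← charFun_map_toLp_pi_gaussianReal, charFun_apply, charFun_apply,
    integral_map (by fun_prop) (by fun_prop), integral_map (by fun_prop) (by fun_prop),
    integral_map (by fun_prop) (by fun_prop)]
  simp_rw [hinner]

theorem map_fromBlocks_mulVec_prod_pi_gaussianReal [DecidableEq ι] {A B C D : Matrix ι ι ℝ}
    (h : (fromBlocks A B C D)ᵀ * fromBlocks A B C D = 1) (v : ℝ≥0) :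
    ((Measure.pi fun _ : ι => gaussianReal 0 v).prod (Measure.pi fun _ => gaussianReal 0 v)).map
        (fun q => (A *ᵥ q.1 + B *ᵥ q.2, C *ᵥ q.1 + D *ᵥ q.2))
      = (Measure.pi fun _ : ι => gaussianReal 0 v).prod (Measure.pi fun _ => gaussianReal 0 v) := by
  let e := MeasurableEquiv.sumPiEquivProdPi fun _ : ι ⊕ ι => ℝ
  have he := measurePreserving_sumPiEquivProdPi fun _ : ι ⊕ ι => gaussianReal 0 v
  have hrot : MeasurePreserving (fromBlocks A B C D *ᵥ ·) (Measure.pi fun _ => gaussianReal 0 v)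
      (Measure.pi fun _ => gaussianReal 0 v) :=
    ⟨by fun_prop, map_mulVec_pi_gaussianReal h v⟩
  have hfun : (fun q : (ι → ℝ) × (ι → ℝ) => (A *ᵥ q.1 + B *ᵥ q.2, C *ᵥ q.1 + D *ᵥ q.2))
      = e ∘ (fromBlocks A B C D *ᵥ ·) ∘ e.symm := by
    ext q i <;> simp [e, fromBlocks_mulVec, MeasurableEquiv.sumPiEquivProdPi] <;> rfl
  rw [hfun]
  exact (he.comp (hrot.comp (he.symm e))).map_eq

end GaussianRotation

section Independence

variable {Ω α β γ : Type*} [MeasurableSpace α] [MeasurableSpace β] [MeasurableSpace γ]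

theorem MeasureTheory.Measure.map_prod_prod_right_comm (ρα : Measure α) (ρβ : Measure β)
    (ργ : Measure γ) [SigmaFinite ρα] [SigmaFinite ρβ] [SigmaFinite ργ] :
    ((ρα.prod ρβ).prod ργ).map (fun q => ((q.1.1, q.2), q.1.2)) = (ρα.prod ργ).prod ρβ := by
  have hassoc := measurePreserving_prodAssoc ρα ρβ ργ
  have hswap := (MeasurePreserving.id ρα).prod (Measure.measurePreserving_swap (μ := ρβ) (ν := ργ))
  have hassoc' := (measurePreserving_prodAssoc ρα ργ ρβ).symm
  exact (hassoc'.comp (hswap.comp hassoc)).map_eq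

theorem MeasureTheory.Measure.map_castSucc_pi {n : ℕ} (ρ : Measure β) [IsProbabilityMeasure ρ] :
    (Measure.pi fun _ : Fin (n + 1) => ρ).map (fun f i => f (Fin.castSucc i))
      = Measure.pi fun _ : Fin n => ρ := by
  have h := (measurePreserving_piFinSuccAbove (fun _ : Fin (n + 1) => ρ) (Fin.last n)).map_eq
  have hfun : (fun f : Fin (n + 1) → β => fun i : Fin n => f i.castSucc)
      = Prod.snd ∘ MeasurableEquiv.piFinSuccAbove (fun _ => β) (Fin.last n) := by
    ext f i
    simp [MeasurableEquiv.piFinSuccAbove, Fin.init]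
  rw [hfun, ← Measure.map_map measurable_snd (MeasurableEquiv.measurable _), h,
    Measure.map_snd_prod, measure_univ, one_smul]

variable {mΩ : MeasurableSpace Ω} {μ : Measure Ω}

theorem ProbabilityTheory.iIndepFun.indepFun_castSucc_last {n : ℕ} {f : Fin (n + 1) → Ω → β}
    (hf : iIndepFun f μ) (hmeas : ∀ i, Measurable (f i)) :
    IndepFun (fun ω (i : Fin n) => f i.castSucc ω) (f (Fin.last n)) μ := by
  have hS : ∀ i : Fin n, i.castSucc ∈ Finset.univ.map Fin.castSuccEmb := by simp
  have hT : Fin.last n ∈ ({Fin.last n} : Finset (Fin (n + 1))) := Finset.mem_singleton_self _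
  have hdisj : Disjoint (Finset.univ.map Fin.castSuccEmb) {Fin.last n} := by
    simp [Fin.castSucc_ne_last]
  refine (hf.indepFun_finset _ _ hdisj hmeas).comp (φ := fun g i => g ⟨i.castSucc, hS i⟩)
    (ψ := fun g => g ⟨Fin.last n, hT⟩) (by fun_prop) ?_
  exact measurable_pi_apply _

variable [IsProbabilityMeasure μ] {A : Ω → α} {B : Ω → β} {C : Ω → γ}

theorem ProbabilityTheory.IndepFun.map_prodMk_prodMk_eq (hA : Measurable A) (hB : Measurable B)
    (hC : Measurable C) (hAB : IndepFun A B μ) (hABC : IndepFun (fun ω => (A ω, B ω)) C μ) :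
    μ.map (fun ω => ((A ω, B ω), C ω)) = ((μ.map A).prod (μ.map B)).prod (μ.map C) := by
  rw [(indepFun_iff_map_prod_eq_prod_map_map (hA.prodMk hB).aemeasurable hC.aemeasurable).mp hABC,
    (indepFun_iff_map_prod_eq_prod_map_map hA.aemeasurable hB.aemeasurable).mp hAB]

theorem ProbabilityTheory.IndepFun.prodMk_indepFun_of_indepFun_prodMk (hA : Measurable A)
    (hB : Measurable B) (hC : Measurable C) (hAB : IndepFun A B μ)
    (hABC : IndepFun (fun ω => (A ω, B ω)) C μ) : IndepFun (fun ω => (A ω, C ω)) B μ := by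
  have hAC : IndepFun A C μ := hABC.comp measurable_fst measurable_id
  rw [indepFun_iff_map_prod_eq_prod_map_map (hA.prodMk hC).aemeasurable hB.aemeasurable,
    (indepFun_iff_map_prod_eq_prod_map_map hA.aemeasurable hC.aemeasurable).mp hAC,
    ← Measure.map_prod_prod_right_comm, ← hAB.map_prodMk_prodMk_eq hA hB hC hABC,
    Measure.map_map (by fun_prop) (by fun_prop)]
  rfl

end Independence

theorem ProbabilityTheory.IndepFun.condExp_comp_prodMk_ae_eq_integral {Ω β γ : Type*}
    {mΩ : MeasurableSpace Ω} {μ : Measure Ω} [IsFiniteMeasure μ] {mβ : MeasurableSpace β}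
    {mγ : MeasurableSpace γ} [StandardBorelSpace γ] [Nonempty γ] {X : Ω → β} {T : Ω → γ}
    (hXT : IndepFun X T μ) (hX : Measurable X) (hT : Measurable T) {f : β × γ → ℝ}
    (hf : StronglyMeasurable f) (hfi : Integrable (fun ω => f (X ω, T ω)) μ) :
    μ[fun ω => f (X ω, T ω) | mβ.comap X] =ᵐ[μ] fun ω => ∫ t, f (X ω, t) ∂(μ.map T) := by
  have hcond : condDistrib T X μ =ᵐ[μ.map X] Kernel.const β (μ.map T) := by
    refine condDistrib_ae_eq_of_measure_eq_compProd X hT.aemeasurable ?_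
    rw [Measure.compProd_const, (indepFun_iff_map_prod_eq_prod_map_map hX.aemeasurable
      hT.aemeasurable).mp hXT]
  filter_upwards [condExp_prod_ae_eq_integral_condDistrib hX hT.aemeasurable hf hfi,
    ae_of_ae_map hX.aemeasurable hcond] with ω hω hcω
  rw [hω, hcω, Kernel.const_apply]

section HatResidualSwap

variable {n p : ℕ} {β : Type*}

noncomputable def hatResidualSwap (q : ((Fin n → Fin p → ℝ) × β) × (Fin n → ℝ) × (Fin n → ℝ)) :
    ((Fin n → Fin p → ℝ) × β) × (Fin n → ℝ) × (Fin n → ℝ) :=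
  (q.1, hatMatrix (of q.1.1) *ᵥ q.2.1 + (1 - hatMatrix (of q.1.1)) *ᵥ q.2.2,
    (1 - hatMatrix (of q.1.1)) *ᵥ q.2.1 + hatMatrix (of q.1.1) *ᵥ q.2.2)

theorem measurePreserving_hatResidualSwap [MeasurableSpace β]
    (κ : Measure ((Fin n → Fin p → ℝ) × β)) [SFinite κ] (v : ℝ≥0) :
    MeasurePreserving hatResidualSwap
      (κ.prod ((Measure.pi fun _ => gaussianReal 0 v).prod (Measure.pi fun _ => gaussianReal 0 v)))
      (κ.prod ((Measure.pi fun _ => gaussianReal 0 v).prod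
        (Measure.pi fun _ => gaussianReal 0 v))) := by
  refine (MeasurePreserving.id κ).skew_product ?_ (ae_of_all _ fun w =>
    map_fromBlocks_mulVec_prod_pi_gaussianReal (A := hatMatrix (of w.1))
      (fromBlocks_one_sub_transpose_mul_self (isIdempotentElem_hatMatrix _)
      (isSymm_hatMatrix _)) v)
  simp only [sub_mulVec, one_mulVec]
  fun_prop

theorem hatMatrix_mulVec_hatResidualSwap_fst
    (q : ((Fin n → Fin p → ℝ) × β) × (Fin n → ℝ) × (Fin n → ℝ)) (c : Fin n → ℝ) :
    hatMatrix (of q.1.1) *ᵥ (c + (hatResidualSwap q).2.1)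
      = hatMatrix (of q.1.1) *ᵥ (c + q.2.1) := by
  have hH := isIdempotentElem_hatMatrix (of q.1.1)
  simp only [hatResidualSwap, mulVec_add, mulVec_mulVec, hH.eq, hH.mul_one_sub_self, zero_mulVec,
    add_zero]

theorem one_sub_hatMatrix_mulVec_hatResidualSwap_snd
    (q : ((Fin n → Fin p → ℝ) × β) × (Fin n → ℝ) × (Fin n → ℝ)) (c : Fin n → ℝ) :
    (1 - hatMatrix (of q.1.1)) *ᵥ (c + (hatResidualSwap q).2.2)
      = (1 - hatMatrix (of q.1.1)) *ᵥ (c + q.2.1) := by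
  have hH := isIdempotentElem_hatMatrix (of q.1.1)
  simp only [hatResidualSwap, mulVec_add, mulVec_mulVec, hH.one_sub.eq, hH.one_sub_mul_self,
    zero_mulVec, add_zero]

end HatResidualSwap

theorem LinInvEstimator.map_comp_ols_prodMk_eq_of_noise_copy {n p : ℕ} {Ω : Type*}
    [MeasurableSpace Ω] {μ : Measure Ω} [IsFiniteMeasure μ] (E : LinInvEstimator n p)
    (θ : Fin p → ℝ) (v : ℝ≥0) {G : (Fin n → Fin p → ℝ) × (Fin p → ℝ) → ℝ} (hG : Measurable G)
    {x : Ω → Fin n → Fin p → ℝ} {u : Ω → ℝ} {a b : Ω → Fin n → ℝ} (hx : Measurable x)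
    (hu : Measurable u) (ha : Measurable a) (hb : Measurable b)
    (hlaw : μ.map (fun ω => ((x ω, u ω), a ω, b ω)) = (μ.map fun ω => (x ω, u ω)).prod
      ((Measure.pi fun _ : Fin n => gaussianReal 0 v).prod
        (Measure.pi fun _ : Fin n => gaussianReal 0 v))) :
    μ.map (fun ω => (G (x ω, ols (x ω) (of (x ω) *ᵥ θ + a ω)),
        E.F (x ω) (of (x ω) *ᵥ θ + a ω) (u ω)))
      = μ.map (fun ω => (G (x ω, ols (x ω) (of (x ω) *ᵥ θ + a ω)),
        E.F (x ω) (of (x ω) *ᵥ θ + b ω) (u ω))) := by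
  let J : Ω → ((Fin n → Fin p → ℝ) × ℝ) × (Fin n → ℝ) × (Fin n → ℝ) :=
    fun ω => ((x ω, u ω), a ω, b ω)
  let Φ₁ : ((Fin n → Fin p → ℝ) × ℝ) × (Fin n → ℝ) × (Fin n → ℝ) → ℝ × ℝ := fun q =>
    (G (q.1.1, ols q.1.1 (of q.1.1 *ᵥ θ + q.2.1)), E.F q.1.1 (of q.1.1 *ᵥ θ + q.2.1) q.1.2)
  let Φ₂ : ((Fin n → Fin p → ℝ) × ℝ) × (Fin n → ℝ) × (Fin n → ℝ) → ℝ × ℝ := fun q =>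
    (G (q.1.1, ols q.1.1 (of q.1.1 *ᵥ θ + q.2.1)), E.F q.1.1 (of q.1.1 *ᵥ θ + q.2.2) q.1.2)
  have hΦ : Φ₂ ∘ hatResidualSwap = Φ₁ := funext fun q => Prod.ext
    (congrArg (fun β => G (q.1.1, β)) (ols_congr_hat (hatMatrix_mulVec_hatResidualSwap_fst q _)))
    (E.F_congr_residual _ (one_sub_hatMatrix_mulVec_hatResidualSwap_snd q _))
  have hR := measurePreserving_hatResidualSwap (μ.map fun ω => (x ω, u ω)) v
  set ρ := (μ.map fun ω => (x ω, u ω)).prod ((Measure.pi fun _ : Fin n => gaussianReal 0 v).prod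
    (Measure.pi fun _ : Fin n => gaussianReal 0 v))
  have hΦ₁ : Measurable Φ₁ := by fun_prop
  have hΦ₂ : Measurable Φ₂ := by fun_prop
  calc μ.map (Φ₁ ∘ J) = ρ.map Φ₁ := by rw [← hlaw, Measure.map_map hΦ₁ (by fun_prop)]
    _ = ρ.map Φ₂ := by rw [← hΦ, ← Measure.map_map hΦ₂ hR.measurable, hR.map_eq]
    _ = μ.map (Φ₂ ∘ J) := by rw [← hlaw, Measure.map_map hΦ₂ (by fun_prop)]

namespace GLM

attribute [local fun_prop] measX measε

variable {n p : ℕ} {Ω : Type} [MeasurableSpace Ω] {μ : Measure Ω} (M : GLM n p Ω μ)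

def trainNoise (ω : Ω) : Fin n → ℝ := fun i => M.ε ω i.castSucc

def testPoint (ω : Ω) : (Fin p → ℝ) × ℝ := (M.X ω (Fin.last n), M.ε ω (Fin.last n))

@[fun_prop]
theorem measurable_Xtr : Measurable M.Xtr :=
  measurable_pi_lambda _ fun _ => (measurable_pi_apply _).comp M.measX

@[fun_prop]
theorem measurable_trainNoise : Measurable M.trainNoise :=
  measurable_pi_lambda _ fun _ => (measurable_pi_apply _).comp M.measε

@[fun_prop]
theorem measurable_Ytr : Measurable M.Ytr := by
  change Measurable fun ω => of (M.Xtr ω) *ᵥ M.θ + M.trainNoise ω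
  fun_prop

theorem indepFun_trainingData_testPoint :
    IndepFun (fun ω => (M.Xtr ω, M.Ytr ω)) M.testPoint μ := by
  refine (M.iid.indepFun_castSucc_last fun i => by fun_prop).comp
    (φ := fun z => (fun i => (z i).1, fun i => (z i).1 ⬝ᵥ M.θ + (z i).2)) ?_ measurable_id
  fun_prop

theorem exists_errXY_ae_eq_comp_ols [IsFiniteMeasure μ] :
    ∃ G : (Fin n → Fin p → ℝ) × (Fin p → ℝ) → ℝ, Measurable G ∧
      M.errXY =ᵐ[μ] fun ω => G (M.Xtr ω, ols (M.Xtr ω) (M.Ytr ω)) := by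
  by_cases hint : Integrable M.testLoss μ
  swap
  · exact ⟨0, measurable_const, by simp [errXY, condExp_of_not_integrable hint]; rfl⟩
  let ℓ : ((Fin n → Fin p → ℝ) × (Fin p → ℝ)) × (Fin p → ℝ) × ℝ → ℝ :=
    fun z => (z.2.1 ⬝ᵥ M.θ + z.2.2 - z.2.1 ⬝ᵥ z.1.2) ^ 2
  have hℓ : Measurable ℓ := by fun_prop
  have hT : Measurable M.testPoint := by
    unfold testPoint
    fun_prop
  refine ⟨fun z => ∫ t, ℓ (z, t) ∂(μ.map M.testPoint),
    hℓ.stronglyMeasurable.integral_prod_right'.measurable, ?_⟩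
  have hf : Measurable fun z : ((Fin n → Fin p → ℝ) × (Fin n → ℝ)) × (Fin p → ℝ) × ℝ =>
      ℓ ((z.1.1, ols z.1.1 z.1.2), z.2) := by fun_prop
  exact M.indepFun_trainingData_testPoint.condExp_comp_prodMk_ae_eq_integral (by fun_prop) hT
    hf.stronglyMeasurable hint

theorem map_trainNoise :
    μ.map M.trainNoise = Measure.pi fun _ : Fin n => gaussianReal 0 M.σ2 := by
  change μ.map ((fun f i => f (Fin.castSucc i)) ∘ M.ε) = _
  rw [← Measure.map_map (by fun_prop) M.measε, M.gauss, Measure.map_castSucc_pi]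

theorem map_design_noise_copy_eq_prod [IsProbabilityMeasure μ] {U : Ω → ℝ} (hU : Measurable U)
    (hUindep : IndepFun (fun ω => (M.Xtr ω, M.Ytr ω)) U μ) {ε' : Ω → Fin n → ℝ}
    (hε' : Measurable ε') (hε'law : μ.map ε' = Measure.pi fun _ : Fin n => gaussianReal 0 M.σ2)
    (hε'indep : IndepFun (fun ω => ((M.X ω, M.ε ω), U ω)) ε' μ) :
    μ.map (fun ω => ((M.Xtr ω, U ω), M.trainNoise ω, ε' ω))
      = (μ.map fun ω => (M.Xtr ω, U ω)).prod ((Measure.pi fun _ : Fin n => gaussianReal 0 M.σ2).prod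
          (Measure.pi fun _ : Fin n => gaussianReal 0 M.σ2)) := by
  have hXε : IndepFun M.Xtr M.trainNoise μ :=
    M.indep.comp (φ := fun (x : Fin (n + 1) → Fin p → ℝ) (i : Fin n) => x i.castSucc)
      (ψ := fun (e : Fin (n + 1) → ℝ) (i : Fin n) => e i.castSucc) (by fun_prop) (by fun_prop)
  have hXεU : IndepFun (fun ω => (M.Xtr ω, M.trainNoise ω)) U μ := by
    have hfun : (fun ω => (M.Xtr ω, M.trainNoise ω))
        = (fun z => (z.1, z.2 - of z.1 *ᵥ M.θ)) ∘ fun ω => (M.Xtr ω, M.Ytr ω) :=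
      funext fun ω => Prod.ext rfl (add_sub_cancel_left _ _).symm
    rw [hfun]
    exact hUindep.comp (by fun_prop) measurable_id
  have hXUε := hXε.prodMk_indepFun_of_indepFun_prodMk (by fun_prop) (by fun_prop) hU hXεU
  have hXUεε' : IndepFun (fun ω => ((M.Xtr ω, U ω), M.trainNoise ω)) ε' μ :=
    hε'indep.comp (φ := fun z : ((Fin (n + 1) → Fin p → ℝ) × (Fin (n + 1) → ℝ)) × ℝ =>
      ((fun i : Fin n => z.1.1 i.castSucc, z.2), fun i : Fin n => z.1.2 i.castSucc))
      (by fun_prop) measurable_id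
  have h := hXUε.map_prodMk_prodMk_eq (by fun_prop) (by fun_prop) hε' hXUεε'
  rw [M.map_trainNoise, hε'law] at h
  rw [← Measure.prodAssoc_prod, ← h, Measure.map_map (by fun_prop) (by fun_prop)]
  rfl

end GLM

theorem linInv_joint_law_swap_general
    {n p : ℕ} {Ω : Type} [mΩ : MeasurableSpace Ω]
    {μ : Measure Ω} [IsProbabilityMeasure μ]
    (M : GLM n p Ω μ) (E : LinInvEstimator n p)
    (U : Ω → ℝ) (hUmeas : Measurable U)
    (hUindep : IndepFun (fun ω => (M.Xtr ω, M.Ytr ω)) U μ)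
    -- `ε'` is an independent copy of the training noise:
    (ε' : Ω → Fin n → ℝ) (hε'meas : Measurable ε')
    (hε'law : Measure.map ε' μ = Measure.pi fun _ : Fin n => gaussianReal 0 M.σ2)
    (hε'indep : IndepFun (fun ω => ((M.X ω, M.ε ω), U ω)) ε' μ) :
    Measure.map (fun ω => (M.errXY ω, E.rv M U ω)) μ
      = Measure.map
          (fun ω => (M.errXY ω,
            E.F (M.Xtr ω) (fun i => M.Xtr ω i ⬝ᵥ M.θ + ε' ω i) (U ω))) μ := by
  obtain ⟨G, hG, hErr⟩ := M.exists_errXY_ae_eq_comp_ols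
  rw [Measure.map_congr (hErr.prodMk .rfl), Measure.map_congr (hErr.prodMk .rfl)]
  exact E.map_comp_ols_prodMk_eq_of_noise_copy M.θ M.σ2 hG M.measurable_Xtr hUmeas
    M.measurable_trainNoise hε'meas
    (M.map_design_noise_copy_eq_prod hUmeas hUindep hε'meas hε'law hε'indep)

/-- **Remark 1 (equality of joint distributions)**: in the homoskedastic Gaussian
linear model, let `Y'` be an independent copy of the response vector generated from
the same features `X` (so `Y'_i = X_iᵀθ + ε'_i` with `ε'` an independent copy of the
training noise).  For a linearly invariant estimator `Êrr`, writing `Êrr_XY` for the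
estimator computed on `(X, Y)` and `Êrr_XY'` for the estimator computed on `(X, Y')`,
the pairs `(Err_XY, Êrr_XY)` and `(Err_XY, Êrr_XY')` have the same joint
distribution. -/
theorem linInv_joint_law_swap
    {n p : ℕ} {Ω : Type} [mΩ : MeasurableSpace Ω] [StandardBorelSpace Ω] [Nonempty Ω]
    {μ : Measure Ω} [IsProbabilityMeasure μ]
    (M : GLM n p Ω μ) (E : LinInvEstimator n p)
    (U : Ω → ℝ) (hUmeas : Measurable U)
    (hUlaw : Measure.map U μ = MeasureTheory.volume.restrict (Set.Icc (0 : ℝ) 1))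
    (hUindep : IndepFun (fun ω => (M.Xtr ω, M.Ytr ω)) U μ)
    -- `ε'` is an independent copy of the training noise:
    (ε' : Ω → Fin n → ℝ) (hε'meas : Measurable ε')
    (hε'law : Measure.map ε' μ = Measure.pi fun _ : Fin n => gaussianReal 0 M.σ2)
    (hε'indep : IndepFun (fun ω => ((M.X ω, M.ε ω), U ω)) ε' μ) :
    Measure.map (fun ω => (M.errXY ω, E.rv M U ω)) μ
      = Measure.map
          (fun ω => (M.errXY ω,
            E.F (M.Xtr ω) (fun i => M.Xtr ω i ⬝ᵥ M.θ + ε' ω i) (U ω))) μ :=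
  linInv_joint_law_swap_general (mΩ := mΩ) M E U hUmeas hUindep ε' hε'meas hε'law hε'indep
end

section
/- When the fitting algorithm is ordinary least squares and the loss is squared error, the out-of-bag bootstrap estimator Êrr^(OOB) and the .632 bootstrap estimator Êrr^(.632) of prediction error are linearly invariant: for every κ ∈ ℝ^p, their values on the data (x_1, y_1 + x_1ᵀκ), …, (x_n, y_n + x_nᵀκ) (with the same bootstrap samples) equal their values on (x_1, y_1), …, (x_n, y_n). -/
/-!
STATEMENT 14: the out-of-bag bootstrap estimator and the .632 bootstrap estimator of
prediction error, with OLS fitting and squared-error loss, are linearly invariant.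
Both estimators are functions only of the residuals `y_i − x_iᵀθ̂_I` across bootstrap
samples `I` (multisets of indices of cardinality `n`), where `θ̂_I` is the OLS fit on
the bootstrap sample `I`.
-/

open scoped Matrix BigOperators

noncomputable section

/-- The OLS coefficient estimate fit on a bootstrap sample `I` (a multiset of indices,
points counted with multiplicity):
`θ̂_I = (∑_{j∈I} x_j x_jᵀ)⁻¹ (∑_{j∈I} y_j x_j)`, the minimizer of
`∑_{j∈I} (y_j − x_jᵀθ)²` when the Gram matrix is invertible. -/
def olsBoot {n p : ℕ} (x : Fin n → Fin p → ℝ) (y : Fin n → ℝ)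
    (I : Multiset (Fin n)) : Fin p → ℝ :=
  ((I.map fun j => Matrix.vecMulVec (x j) (x j)).sum)⁻¹ *ᵥ
    ((I.map fun j => y j • x j).sum)

/-- The array of residuals `y_i − x_iᵀθ̂_{I_b}` across the bootstrap samples
`I_1, …, I_B`. -/
def bootResiduals {n p B : ℕ} (x : Fin n → Fin p → ℝ) (y : Fin n → ℝ)
    (I : Fin B → Multiset (Fin n)) : Fin B → Fin n → ℝ :=
  fun b i => y i - x i ⬝ᵥ olsBoot x y (I b)

lemma sum_map_mulVec {n p : ℕ} (x : Fin n → Fin p → ℝ) (κ : Fin p → ℝ)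
    (I : Multiset (Fin n)) :
    (I.map fun j => Matrix.vecMulVec (x j) (x j) *ᵥ κ).sum
      = (I.map fun j => Matrix.vecMulVec (x j) (x j)).sum *ᵥ κ := by
  induction I using Multiset.induction with
  | empty => simp
  | cons a s ih => simp [ih, Matrix.add_mulVec]

lemma olsBoot_shift {n p : ℕ} (x : Fin n → Fin p → ℝ) (y : Fin n → ℝ)
    (I : Multiset (Fin n))
    (hG : IsUnit ((I.map fun j => Matrix.vecMulVec (x j) (x j)).sum))
    (κ : Fin p → ℝ) :
    olsBoot x (fun i => y i + x i ⬝ᵥ κ) I = olsBoot x y I + κ := by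
  have hsum : ((I.map fun j => (y j + x j ⬝ᵥ κ) • x j).sum)
      = (I.map fun j => y j • x j).sum
        + (I.map fun j => Matrix.vecMulVec (x j) (x j)).sum *ᵥ κ := by
    have h1 : (I.map fun j => (y j + x j ⬝ᵥ κ) • x j)
        = (I.map fun j => y j • x j + Matrix.vecMulVec (x j) (x j) *ᵥ κ) := by
      refine Multiset.map_congr rfl fun j _ => ?_
      funext i
      simp only [Matrix.mulVec, Matrix.vecMulVec, dotProduct, Pi.add_apply,
        Pi.smul_apply, smul_eq_mul, Matrix.of_apply]
      rw [add_mul, Finset.sum_mul]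
      congr 1
      exact Finset.sum_congr rfl fun k _ => by ring
    rw [h1, Multiset.sum_map_add, sum_map_mulVec]
  unfold olsBoot
  rw [hsum, Matrix.mulVec_add, Matrix.mulVec_mulVec,
    Matrix.nonsing_inv_mul _ ((Matrix.isUnit_iff_isUnit_det _).mp hG),
    Matrix.one_mulVec]

/-- **Linear invariance of the bootstrap estimators of prediction error**
(Lemma A.1).  Let `I_1, …, I_B` be bootstrap samples, each a multiset of indices of
cardinality `n`, with invertible Gram matrices (so the OLS fits are well defined).
The out-of-bag estimator `Êrr^(OOB)` and the .632 estimator `Êrr^(.632)` are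
functions `g` only of the residuals `y_i − x_iᵀθ̂_{I_b}` across bootstrap samples;
for any such estimator and every `κ ∈ ℝ^p`, its value on the shifted data
`(x_i, y_i + x_iᵀκ)` (with the same bootstrap samples) equals its value on
`(x_i, y_i)`. -/
theorem bootstrap_ols_linearly_invariant {n p B : ℕ}
    (x : Fin n → Fin p → ℝ) (y : Fin n → ℝ) (I : Fin B → Multiset (Fin n))
    (hcard : ∀ b, (I b).card = n)
    (hGram : ∀ b, IsUnit (((I b).map fun j => Matrix.vecMulVec (x j) (x j)).sum))
    (g : (Fin B → Fin n → ℝ) → ℝ)   -- the OOB or the .632 estimator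
    (κ : Fin p → ℝ) :
    g (bootResiduals x (fun i => y i + x i ⬝ᵥ κ) I) = g (bootResiduals x y I) := by
  congr 1
  funext b i
  unfold bootResiduals
  rw [olsBoot_shift x y (I b) (hGram b) κ]
  rw [dotProduct_add]
  ring

end
end
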